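/- arXiv:2508.15129 — 2 statements merged into one kernel-verified Lean document; each statement's English description precedes it below -/
import Mathlib

section
/- Let X = [[1,0,0],[0,0,t⁻¹],[0,t²,0]] and Y = [[0,1,0],[t,0,0],[0,0,1]] be matrices over ℤ[t,t⁻¹]. Then for every integer i ≥ 1, Y^i · X ≠ X · Y^i. -/
/-!
Since `Y² = diag(t, t, 1)`, we get `Y^(2k) = diag(t^k, t^k, 1)` and `Y^(2k+1) = Y^(2k) Y`.
If `Y^(2k)` commuted with `X`, the `(2,3)` entries would give `t^(k-1) = t⁻¹`, i.e. `k = 0`;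
if `Y^(2k+1)` did, the `(1,3)` entries would give `t^(k-1) = 0`, impossible for a unit.
-/

open Matrix LaurentPolynomial

section

variable {R : Type*} [CommSemiring R]

theorem swap_pow_two (a : R) :
    !![0, 1, 0; a, 0, 0; 0, 0, 1] ^ 2 = diagonal ![a, a, 1] := by
  rw [sq, mul_fin_three]
  ext i j
  fin_cases i <;> fin_cases j <;> simp

theorem swap_pow_even (a : R) (k : ℕ) :
    !![0, 1, 0; a, 0, 0; 0, 0, 1] ^ (2 * k) = !![a ^ k, 0, 0; 0, a ^ k, 0; 0, 0, 1] := by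
  rw [pow_mul, swap_pow_two, diagonal_pow]
  ext i j
  fin_cases i <;> fin_cases j <;> simp

theorem swap_pow_odd (a : R) (k : ℕ) :
    !![0, 1, 0; a, 0, 0; 0, 0, 1] ^ (2 * k + 1) = !![0, a ^ k, 0; a ^ (k + 1), 0, 0; 0, 0, 1] := by
  rw [pow_succ, swap_pow_even, mul_fin_three]
  simp [pow_succ]

theorem pow_mul_eq_of_swap_pow_even_commute {a b c : R} {k : ℕ}
    (h : !![0, 1, 0; a, 0, 0; 0, 0, 1] ^ (2 * k) * !![1, 0, 0; 0, 0, b; 0, c, 0] =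
      !![1, 0, 0; 0, 0, b; 0, c, 0] * !![0, 1, 0; a, 0, 0; 0, 0, 1] ^ (2 * k)) :
    a ^ k * b = b := by
  simpa [swap_pow_even, mul_fin_three] using congrFun (congrFun h 1) 2

theorem pow_mul_eq_zero_of_swap_pow_odd_commute {a b c : R} {k : ℕ}
    (h : !![0, 1, 0; a, 0, 0; 0, 0, 1] ^ (2 * k + 1) * !![1, 0, 0; 0, 0, b; 0, c, 0] =
      !![1, 0, 0; 0, 0, b; 0, c, 0] * !![0, 1, 0; a, 0, 0; 0, 0, 1] ^ (2 * k + 1)) :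
    a ^ k * b = 0 := by
  simpa [swap_pow_odd, mul_fin_three] using congrFun (congrFun h 0) 2

end

theorem T_injective {R : Type*} [Semiring R] [Nontrivial R] :
    Function.Injective (T : ℤ → R[T;T⁻¹]) := by
  intro m n h
  by_contra hmn
  have hm : (T m : R[T;T⁻¹]).coeff m = 1 := by simp
  rw [h, T_apply, if_neg (Ne.symm hmn)] at hm
  exact zero_ne_one hm

/-- For X = [[1,0,0],[0,0,t⁻¹],[0,t²,0]] and Y = [[0,1,0],[t,0,0],[0,0,1]],
    Y^i · X ≠ X · Y^i for every i ≥ 1. -/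
theorem stmt4 :
    let X : Matrix (Fin 3) (Fin 3) (LaurentPolynomial ℤ) := !![1, 0, 0; 0, 0, T (-1); 0, T 2, 0]
    let Y : Matrix (Fin 3) (Fin 3) (LaurentPolynomial ℤ) := !![0, 1, 0; T 1, 0, 0; 0, 0, 1]
    ∀ i : ℕ, 1 ≤ i → Y ^ i * X ≠ X * Y ^ i := by
  intro X Y i hi h
  obtain ⟨k, rfl | rfl⟩ := Nat.even_or_odd' i
  · have hk := pow_mul_eq_of_swap_pow_even_commute h
    rw [T_pow, mul_one, ← T_add] at hk
    have := T_injective hk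
    omega
  · have hk := pow_mul_eq_zero_of_swap_pow_odd_commute h
    rw [T_pow, ← T_add] at hk
    exact (isUnit_T _).ne_zero hk
end

section
/- In the braid group B₃ = ⟨σ, τ | στσ = τστ⟩, the elements x = τ⁻¹στ(τ⁻¹σ)^(k-1), y = σ(τ⁻¹σ)^(k-1), z = (τ⁻¹σ)^k τ satisfy the relations x = V⁻¹yV and x = W⁻¹zW, where V = zyx⁻¹z⁻¹ and W = (xy⁻¹)^(k-1)z⁻¹. -/
/-- The braid relation στσ = τστ (as a relator word), with σ, τ the generators 0, 1. -/
def braidRels : Set (FreeGroup (Fin 2)) :=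
  let σ := FreeGroup.of (0 : Fin 2)
  let τ := FreeGroup.of (1 : Fin 2)
  {σ * τ * σ * (τ * σ * τ)⁻¹}

/-- The braid group on three strands, B₃ = ⟨σ, τ | στσ = τστ⟩. -/
def B3 := PresentedGroup braidRels

instance : Group B3 := inferInstanceAs (Group (PresentedGroup braidRels))

/-- First conjugation identity, in any group with the braid relation. -/
lemma key1 {G : Type*} [Group G] (σ τ : G) (hb : σ * τ * σ = τ * σ * τ) (m : ℕ) :
    τ⁻¹ * σ * τ * (τ⁻¹ * σ) ^ m =
      ((τ⁻¹ * σ) ^ (m + 1) * τ * (σ * (τ⁻¹ * σ) ^ m) * (τ⁻¹ * σ * τ * (τ⁻¹ * σ) ^ m)⁻¹ *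
          ((τ⁻¹ * σ) ^ (m + 1) * τ)⁻¹)⁻¹ *
        (σ * (τ⁻¹ * σ) ^ m) *
        ((τ⁻¹ * σ) ^ (m + 1) * τ * (σ * (τ⁻¹ * σ) ^ m) * (τ⁻¹ * σ * τ * (τ⁻¹ * σ) ^ m)⁻¹ *
          ((τ⁻¹ * σ) ^ (m + 1) * τ)⁻¹) := by
  set a : G := τ⁻¹ * σ with ha
  have hσ : σ = τ * a := by rw [ha]; group
  have h1 : τ * σ * τ⁻¹ * σ⁻¹ = a⁻¹ := by
    rw [ha]
    have c : σ * (τ * σ * τ⁻¹ * σ⁻¹) * (σ * τ) = σ * (τ⁻¹ * σ)⁻¹ * (σ * τ) := by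
      calc σ * (τ * σ * τ⁻¹ * σ⁻¹) * (σ * τ) = σ * τ * σ := by group
        _ = τ * σ * τ := hb
        _ = σ * (τ⁻¹ * σ)⁻¹ * (σ * τ) := by group
    exact mul_left_cancel (mul_right_cancel c)
  have hV : a ^ (m + 1) * τ * (σ * a ^ m) * (a * τ * a ^ m)⁻¹ * (a ^ (m + 1) * τ)⁻¹ = a⁻¹ := by
    calc a ^ (m + 1) * τ * (σ * a ^ m) * (a * τ * a ^ m)⁻¹ * (a ^ (m + 1) * τ)⁻¹
        = a ^ (m + 1) * (τ * σ * τ⁻¹ * σ⁻¹) * (σ * a⁻¹ * τ⁻¹) * (a ^ (m + 1))⁻¹ := by group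
      _ = a ^ (m + 1) * a⁻¹ * (σ * a⁻¹ * τ⁻¹) * (a ^ (m + 1))⁻¹ := by rw [h1]
      _ = a ^ (m + 1) * a⁻¹ * ((τ * a) * a⁻¹ * τ⁻¹) * (a ^ (m + 1))⁻¹ := by rw [← hσ]
      _ = a⁻¹ := by group
  rw [hV, hσ]
  group

/-- Second conjugation identity, in any group with the braid relation. -/
lemma key2 {G : Type*} [Group G] (σ τ : G) (hb : σ * τ * σ = τ * σ * τ) (m : ℕ) :
    τ⁻¹ * σ * τ * (τ⁻¹ * σ) ^ m =
      ((τ⁻¹ * σ * τ * (τ⁻¹ * σ) ^ m * (σ * (τ⁻¹ * σ) ^ m)⁻¹) ^ m *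
          ((τ⁻¹ * σ) ^ (m + 1) * τ)⁻¹)⁻¹ *
        ((τ⁻¹ * σ) ^ (m + 1) * τ) *
        ((τ⁻¹ * σ * τ * (τ⁻¹ * σ) ^ m * (σ * (τ⁻¹ * σ) ^ m)⁻¹) ^ m *
          ((τ⁻¹ * σ) ^ (m + 1) * τ)⁻¹) := by
  set a : G := τ⁻¹ * σ with ha
  have h3 : τ * a * τ * σ⁻¹ * τ⁻¹ = a := by
    rw [ha]
    have c : τ * (τ * (τ⁻¹ * σ) * τ * σ⁻¹ * τ⁻¹) * (τ * σ) = τ * (τ⁻¹ * σ) * (τ * σ) := by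
      calc τ * (τ * (τ⁻¹ * σ) * τ * σ⁻¹ * τ⁻¹) * (τ * σ) = τ * σ * τ := by group
        _ = σ * τ * σ := hb.symm
        _ = τ * (τ⁻¹ * σ) * (τ * σ) := by group
    exact mul_left_cancel (mul_right_cancel c)
  have hbz : (a ^ (m + 1) * τ) * (a * τ * a ^ m * (σ * a ^ m)⁻¹) * (a ^ (m + 1) * τ)⁻¹ = a := by
    calc (a ^ (m + 1) * τ) * (a * τ * a ^ m * (σ * a ^ m)⁻¹) * (a ^ (m + 1) * τ)⁻¹
        = a ^ (m + 1) * (τ * a * τ * σ⁻¹ * τ⁻¹) * (a ^ (m + 1))⁻¹ := by group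
      _ = a ^ (m + 1) * a * (a ^ (m + 1))⁻¹ := by rw [h3]
      _ = a := by group
  have hP : (a ^ (m + 1) * τ) * (a * τ * a ^ m * (σ * a ^ m)⁻¹) ^ m * (a ^ (m + 1) * τ)⁻¹
      = a ^ m := by
    rw [← conj_pow, hbz]
  generalize hB : (a * τ * a ^ m * (σ * a ^ m)⁻¹) ^ m = B at hP ⊢
  have hB' : B = (a ^ (m + 1) * τ)⁻¹ * (a ^ m * (a ^ (m + 1) * τ)) := by
    rw [← hP]; group
  rw [hB']
  group

/-- In B₃, the elements x = τ⁻¹στ(τ⁻¹σ)^(k-1), y = σ(τ⁻¹σ)^(k-1), z = (τ⁻¹σ)^k τ satisfy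
    x = V⁻¹yV and x = W⁻¹zW, where V = zyx⁻¹z⁻¹ and W = (xy⁻¹)^(k-1)z⁻¹. -/
theorem stmt15 (k : ℕ) (hk : 1 ≤ k) :
    let σ : B3 := PresentedGroup.of 0
    let τ : B3 := PresentedGroup.of 1
    let x := τ⁻¹ * σ * τ * (τ⁻¹ * σ) ^ (k - 1)
    let y := σ * (τ⁻¹ * σ) ^ (k - 1)
    let z := (τ⁻¹ * σ) ^ k * τ
    let V := z * y * x⁻¹ * z⁻¹
    let W := (x * y⁻¹) ^ (k - 1) * z⁻¹
    x = V⁻¹ * y * V ∧ x = W⁻¹ * z * W := by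
  obtain ⟨m, rfl⟩ : ∃ m, k = m + 1 := ⟨k - 1, (Nat.succ_pred_eq_of_pos hk).symm⟩
  intro σ τ x y z V W
  have hb : σ * τ * σ = τ * σ * τ := by
    have h : (QuotientGroup.mk (FreeGroup.of (0 : Fin 2) * FreeGroup.of 1 * FreeGroup.of 0 *
        (FreeGroup.of 1 * FreeGroup.of 0 * FreeGroup.of 1)⁻¹) : PresentedGroup braidRels) = 1 := by
      apply (QuotientGroup.eq_one_iff _).mpr
      exact Subgroup.subset_normalClosure (by simp [braidRels])
    have h2 : σ * τ * σ * (τ * σ * τ)⁻¹ = 1 := h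
    exact mul_inv_eq_one.mp h2
  exact ⟨key1 σ τ hb m, key2 σ τ hb m⟩
end
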